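/- arXiv:1508.01904 — 7 statements merged into one kernel-verified Lean document; each statement's English description precedes it below -/
import Mathlib

section
/- Let K, I ∈ ℝ^{q×q} with K symmetric positive definite, and let 0 < τ < 1. Then the scalar-parametrized trace expression tr((1/(τ(τ−1))) K^τ + (1/(1−τ)) K + (1/τ) I_q) is nonnegative, with equality if and only if K = I_q. -/
/-!
Writing `K = U diag(λ) Uᵀ`, the trace is `∑ᵢ g(λᵢ)` with
`g(x) = (1 + τ (x - 1) - x ^ τ) / (τ (1 - τ))`. Bernoulli's inequality `x ^ τ ≤ 1 + τ (x - 1)`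
for `0 < τ < 1` makes every summand nonnegative, with equality exactly at `x = 1`; and a symmetric
matrix all of whose eigenvalues are `1` is the identity.
-/

open Matrix

noncomputable def matFun {n : ℕ} (A : Matrix (Fin n) (Fin n) ℝ) (f : ℝ → ℝ) :
    Matrix (Fin n) (Fin n) ℝ :=
  if h : A.IsHermitian then
    (h.eigenvectorUnitary : Matrix (Fin n) (Fin n) ℝ) *
      Matrix.diagonal (fun i => f (h.eigenvalues i)) *
      star (h.eigenvectorUnitary : Matrix (Fin n) (Fin n) ℝ)
  else 0

noncomputable def specNorm {n : ℕ} (A : Matrix (Fin n) (Fin n) ℝ) : ℝ :=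
  if h : A.IsHermitian then ⨆ i, h.eigenvalues i else 0

noncomputable def tauDivergenceFun (τ x : ℝ) : ℝ :=
  1 / (τ * (τ - 1)) * x ^ τ + 1 / (1 - τ) * x + 1 / τ

section tauDivergenceFun

variable {τ x : ℝ}

lemma tauDivergenceFun_eq (hτ0 : τ ≠ 0) (hτ1 : τ ≠ 1) :
    tauDivergenceFun τ x = (1 + τ * (x - 1) - x ^ τ) / (τ * (1 - τ)) := by
  have : 1 - τ ≠ 0 := sub_ne_zero.mpr hτ1.symm
  have : τ - 1 ≠ 0 := sub_ne_zero.mpr hτ1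
  unfold tauDivergenceFun
  field_simp
  ring

lemma tauDivergenceFun_nonneg (hτ0 : 0 < τ) (hτ1 : τ < 1) (hx : 0 ≤ x) :
    0 ≤ tauDivergenceFun τ x := by
  have bernoulli : x ^ τ ≤ 1 + τ * (x - 1) := by
    simpa using rpow_one_add_le_one_add_mul_self (s := x - 1) (by linarith) hτ0.le hτ1.le
  rw [tauDivergenceFun_eq hτ0.ne' hτ1.ne]
  exact div_nonneg (by linarith) (mul_nonneg hτ0.le (by linarith))

lemma tauDivergenceFun_eq_zero_iff (hτ0 : 0 < τ) (hτ1 : τ < 1) (hx : 0 ≤ x) :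
    tauDivergenceFun τ x = 0 ↔ x = 1 := by
  refine ⟨fun h => ?_, fun h => by simp [h, tauDivergenceFun_eq hτ0.ne' hτ1.ne]⟩
  by_contra hx1
  have bernoulli : x ^ τ < 1 + τ * (x - 1) := by
    simpa using rpow_one_add_lt_one_add_mul_self (s := x - 1) (by linarith)
      (sub_ne_zero.mpr hx1) hτ0 hτ1
  rw [tauDivergenceFun_eq hτ0.ne' hτ1.ne] at h
  exact (div_pos (by linarith) (mul_pos hτ0 (by linarith))).ne' h

end tauDivergenceFun

namespace Matrix.IsHermitian

lemma eq_one_iff_eigenvalues_eq_one {𝕜 n : Type*} [RCLike 𝕜] [Fintype n] [DecidableEq n]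
    {A : Matrix n n 𝕜} (hA : A.IsHermitian) : A = 1 ↔ ∀ i, hA.eigenvalues i = 1 := by
  constructor
  · rintro rfl i
    have : Nonempty n := ⟨i⟩
    simpa [spectrum.one_eq] using hA.eigenvalues_mem_spectrum_real i
  · intro h
    rw [hA.spectral_theorem]
    simp [Function.comp_def, h]

variable {n : ℕ} {A : Matrix (Fin n) (Fin n) ℝ}

lemma trace_matFun (hA : A.IsHermitian) (f : ℝ → ℝ) :
    (matFun A f).trace = ∑ i, f (hA.eigenvalues i) := by
  rw [matFun, dif_pos hA, trace_mul_cycle, Unitary.coe_star_mul_self, one_mul, trace_diagonal]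

lemma trace_smul_matFun_add_smul_add_smul (hA : A.IsHermitian) (f : ℝ → ℝ) (a b c : ℝ) :
    (a • matFun A f + b • A + c • (1 : Matrix (Fin n) (Fin n) ℝ)).trace =
      ∑ i, (a * f (hA.eigenvalues i) + b * hA.eigenvalues i + c) := by
  simp only [trace_add, trace_smul, hA.trace_matFun, hA.trace_eq_sum_eigenvalues, trace_one,
    smul_eq_mul, Finset.sum_add_distrib, Finset.mul_sum, Finset.sum_const, Finset.card_univ,
    Fintype.card_fin, nsmul_eq_mul, RCLike.ofReal_real_eq_id, id, mul_comm c]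

end Matrix.IsHermitian

/-- The covariance part of the τ divergence (0 < τ < 1):
`tr((1/(τ(τ−1))) K^τ + (1/(1−τ)) K + (1/τ) I)` is nonnegative and vanishes
iff `K = I`.  The matrix power `K^τ` is defined spectrally via `matFun`. -/
theorem tau_divergence_cov_nonneg_eq_zero_iff {q : ℕ} (K : Matrix (Fin q) (Fin q) ℝ)
    (hK : K.PosDef) (τ : ℝ) (hτ0 : 0 < τ) (hτ1 : τ < 1) :
    0 ≤ ((1 / (τ * (τ - 1))) • matFun K (fun x => x ^ τ) + (1 / (1 - τ)) • K +
          (1 / τ) • (1 : Matrix (Fin q) (Fin q) ℝ)).trace ∧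
    (((1 / (τ * (τ - 1))) • matFun K (fun x => x ^ τ) + (1 / (1 - τ)) • K +
          (1 / τ) • (1 : Matrix (Fin q) (Fin q) ℝ)).trace = 0 ↔ K = 1) := by
  have hev : ∀ i, 0 ≤ hK.1.eigenvalues i := fun i => (hK.eigenvalues_pos i).le
  have htrace : ((1 / (τ * (τ - 1))) • matFun K (fun x => x ^ τ) + (1 / (1 - τ)) • K +
      (1 / τ) • (1 : Matrix (Fin q) (Fin q) ℝ)).trace =
        ∑ i, tauDivergenceFun τ (hK.1.eigenvalues i) :=
    hK.1.trace_smul_matFun_add_smul_add_smul _ _ _ _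
  have hsummand : ∀ i ∈ Finset.univ, 0 ≤ tauDivergenceFun τ (hK.1.eigenvalues i) :=
    fun i _ => tauDivergenceFun_nonneg hτ0 hτ1 (hev i)
  rw [htrace, Finset.sum_eq_zero_iff_of_nonneg hsummand, hK.1.eq_one_iff_eigenvalues_eq_one]
  refine ⟨Finset.sum_nonneg hsummand, ?_⟩
  simp only [Finset.mem_univ, true_implies, tauDivergenceFun_eq_zero_iff hτ0 hτ1 (hev _)]
end

section
/- Let P ∈ ℝ^{n×n} be symmetric positive definite with factorization P = L_P L_Pᵀ, let 0 ≤ τ < 1, and let λ > (1−τ)‖P‖ where ‖P‖ is the spectral norm. Then the matrix I_n − ((1−τ)/λ) L_Pᵀ L_P is symmetric positive definite, and the matrix P̃ = L_P (I_n − ((1−τ)/λ) L_Pᵀ L_P)^{1/(τ−1)} L_Pᵀ is symmetric positive definite and satisfies P̃ − P positive definite. -/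
open Matrix

/-!
Since `P = L Lᵀ` is positive definite, `L` is invertible, so an eigenvector `v` of `Lᵀ L` with
eigenvalue `μ` yields the eigenvector `L v` of `P` with the same eigenvalue; hence
`0 < μ ≤ ‖P‖`. With `c = (1 - τ) / λ` we have `c ‖P‖ < 1`, so the eigenvalues of
`A = I - c Lᵀ L` lie in `(0, 1)` and those of `A ^ (1 / (τ - 1))` exceed `1`. Thus `A`,
`A ^ (1 / (τ - 1))` and `A ^ (1 / (τ - 1)) - I` are positive definite, and congruence by the
invertible `L` carries the last two to `P̃` and `P̃ - P = L (A ^ (1 / (τ - 1)) - I) Lᵀ`.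
-/

namespace Matrix

section

variable {m : Type*} [Fintype m] [DecidableEq m]

lemma IsHermitian.mem_range_eigenvalues_of_mulVec_eq_smul {A : Matrix m m ℝ}
    (hA : A.IsHermitian) {v : m → ℝ} {μ : ℝ} (hv : v ≠ 0) (h : A *ᵥ v = μ • v) :
    μ ∈ Set.range hA.eigenvalues := by
  rw [← hA.spectrum_real_eq_range_eigenvalues, ← spectrum_toLin',
    ← Module.End.hasEigenvalue_iff_mem_spectrum]
  exact Module.End.hasEigenvalue_of_hasEigenvector
    ⟨Module.End.mem_eigenspace_iff.2 (by rwa [toLin'_apply]), hv⟩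

lemma mem_range_eigenvalues_mul_transpose_of_mulVec_eq_smul {L : Matrix m m ℝ} (hL : IsUnit L)
    (hP : (L * Lᵀ).IsHermitian) {v : m → ℝ} {μ : ℝ} (hv : v ≠ 0)
    (h : (Lᵀ * L) *ᵥ v = μ • v) : μ ∈ Set.range hP.eigenvalues := by
  refine hP.mem_range_eigenvalues_of_mulVec_eq_smul (v := L *ᵥ v) ?_ ?_
  · exact fun h0 => hv (mulVec_injective_of_isUnit hL (h0.trans (mulVec_zero L).symm))
  · rw [mulVec_mulVec, mul_assoc, ← mulVec_mulVec, h, mulVec_smul]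

lemma IsUnit.posDef_mul_mul_transpose {L M : Matrix m m ℝ} (hL : IsUnit L) (hM : M.PosDef) :
    (L * M * Lᵀ).PosDef := by
  rw [← conjTranspose_eq_transpose_of_trivial, ← star_eq_conjTranspose]
  exact hL.posDef_star_right_conjugate_iff.2 hM

end

variable {n : ℕ}

lemma matFun_of_isHermitian {A : Matrix (Fin n) (Fin n) ℝ} (hA : A.IsHermitian)
    (f : ℝ → ℝ) : matFun A f = (hA.eigenvectorUnitary : Matrix (Fin n) (Fin n) ℝ) *
      diagonal (fun i => f (hA.eigenvalues i)) *
      star (hA.eigenvectorUnitary : Matrix (Fin n) (Fin n) ℝ) :=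
  dif_pos hA

lemma IsHermitian.posDef_matFun {A : Matrix (Fin n) (Fin n) ℝ} (hA : A.IsHermitian)
    {f : ℝ → ℝ} (hf : ∀ i, 0 < f (hA.eigenvalues i)) : (matFun A f).PosDef := by
  rw [matFun_of_isHermitian hA, Unitary.isUnit_coe.posDef_star_right_conjugate_iff]
  exact posDef_diagonal_iff.2 hf

lemma IsHermitian.matFun_sub_one {A : Matrix (Fin n) (Fin n) ℝ} (hA : A.IsHermitian)
    (f : ℝ → ℝ) : matFun A f - 1 = matFun A (fun x => f x - 1) := by
  have hdiag : diagonal (fun i => f (hA.eigenvalues i) - 1) =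
      diagonal (fun i => f (hA.eigenvalues i)) - 1 := by
    rw [← diagonal_one, diagonal_sub]
  rw [matFun_of_isHermitian hA, matFun_of_isHermitian hA, hdiag, mul_sub, sub_mul, mul_one,
    Unitary.mul_star_self_of_mem hA.eigenvectorUnitary.2]

lemma PosDef.specNorm_nonneg {P : Matrix (Fin n) (Fin n) ℝ} (hP : P.PosDef) :
    0 ≤ specNorm P := by
  rw [specNorm, dif_pos hP.1]
  exact Real.iSup_nonneg fun i => (hP.eigenvalues_pos i).le

lemma IsHermitian.eigenvalues_le_specNorm {P : Matrix (Fin n) (Fin n) ℝ} (hP : P.IsHermitian)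
    (i : Fin n) : hP.eigenvalues i ≤ specNorm P := by
  rw [specNorm, dif_pos hP]
  exact le_ciSup (Set.finite_range _).bddAbove i

lemma eigenvalues_one_sub_smul_transpose_mul_self_mem_Ioo {L : Matrix (Fin n) (Fin n) ℝ}
    (hP : (L * Lᵀ).PosDef) {c : ℝ} (hc : 0 < c) (hcP : c * specNorm (L * Lᵀ) < 1)
    (hA : (1 - c • (Lᵀ * L)).IsHermitian) (i : Fin n) :
    hA.eigenvalues i ∈ Set.Ioo 0 1 := by
  set α := hA.eigenvalues i
  set v : Fin n → ℝ := ⇑(hA.eigenvectorBasis i)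
  have hv : v ≠ 0 := fun h0 =>
    hA.eigenvectorBasis.orthonormal.ne_zero i (by ext j; exact congrFun h0 j)
  have hBv : (Lᵀ * L) *ᵥ v = ((1 - α) / c) • v := by
    have hAv : v - c • ((Lᵀ * L) *ᵥ v) = α • v := by
      rw [← hA.mulVec_eigenvectorBasis i, sub_mulVec, one_mulVec, smul_mulVec]
    rw [div_eq_inv_mul, mul_smul, sub_smul, one_smul, ← hAv, sub_sub_cancel, smul_smul,
      inv_mul_cancel₀ hc.ne', one_smul]
  obtain ⟨j, hj⟩ := mem_range_eigenvalues_mul_transpose_of_mulVec_eq_smul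
    (isUnit_of_mul_isUnit_left hP.isUnit) hP.1 hv hBv
  have hpos : 0 < (1 - α) / c := hj ▸ hP.eigenvalues_pos j
  have hle : (1 - α) / c ≤ specNorm (L * Lᵀ) := hj ▸ hP.1.eigenvalues_le_specNorm j
  have hcle := mul_le_mul_of_nonneg_left hle hc.le
  rw [mul_div_cancel₀ _ hc.ne'] at hcle
  exact ⟨by linarith, by linarith [(div_pos_iff_of_pos_right hc).1 hpos]⟩

end Matrix

theorem least_favorable_cov_posdef_general {n : ℕ} (P L : Matrix (Fin n) (Fin n) ℝ)
    (hfac : P = L * Lᵀ) (hP : P.PosDef) (τ : ℝ) (hτ1 : τ < 1)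
    (lam : ℝ) (hlam : (1 - τ) * specNorm P < lam) :
    ((1 : Matrix (Fin n) (Fin n) ℝ) - ((1 - τ) / lam) • (Lᵀ * L)).PosDef ∧
    (L * matFun ((1 : Matrix (Fin n) (Fin n) ℝ) - ((1 - τ) / lam) • (Lᵀ * L))
        (fun x => x ^ (1 / (τ - 1))) * Lᵀ).PosDef ∧
    (L * matFun ((1 : Matrix (Fin n) (Fin n) ℝ) - ((1 - τ) / lam) • (Lᵀ * L))
        (fun x => x ^ (1 / (τ - 1))) * Lᵀ - P).PosDef := by
  subst hfac
  set c := (1 - τ) / lam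
  have hL : IsUnit L := isUnit_of_mul_isUnit_left hP.isUnit
  have hlam0 : 0 < lam := (mul_nonneg (by linarith) hP.specNorm_nonneg).trans_lt hlam
  have hc : 0 < c := div_pos (by linarith) hlam0
  have hcP : c * specNorm (L * Lᵀ) < 1 := by rwa [div_mul_eq_mul_div, div_lt_one hlam0]
  have hA : (1 - c • (Lᵀ * L)).IsHermitian :=
    isHermitian_one.sub ((isSymm_transpose_mul_self L).smul c)
  have heig := eigenvalues_one_sub_smul_transpose_mul_self_mem_Ioo hP hc hcP hA
  have hpow : ∀ i, 1 < hA.eigenvalues i ^ (1 / (τ - 1)) := fun i =>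
    Real.one_lt_rpow_of_pos_of_lt_one_of_neg (heig i).1 (heig i).2 (one_div_neg.2 (by linarith))
  refine ⟨hA.posDef_iff_eigenvalues_pos.2 fun i => (heig i).1,
    hL.posDef_mul_mul_transpose (hA.posDef_matFun fun i => one_pos.trans (hpow i)), ?_⟩
  have hdiff := hL.posDef_mul_mul_transpose
    (hA.posDef_matFun (f := fun x => x ^ (1 / (τ - 1)) - 1) fun i => sub_pos.2 (hpow i))
  rwa [← hA.matFun_sub_one, mul_sub, sub_mul, mul_one] at hdiff

/-- Least favorable error covariance, case `0 ≤ τ < 1`:  with `P = L_P L_Pᵀ`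
positive definite and `λ > (1−τ)‖P‖`, the matrix `I − ((1−τ)/λ) L_Pᵀ L_P` is
positive definite, and `P̃ = L_P (I − ((1−τ)/λ) L_Pᵀ L_P)^{1/(τ−1)} L_Pᵀ` is
positive definite with `P̃ − P` positive definite. -/
theorem least_favorable_cov_posdef {n : ℕ} (P L : Matrix (Fin n) (Fin n) ℝ)
    (hfac : P = L * Lᵀ) (hP : P.PosDef) (τ : ℝ) (hτ0 : 0 ≤ τ) (hτ1 : τ < 1)
    (lam : ℝ) (hlam : (1 - τ) * specNorm P < lam) :
    ((1 : Matrix (Fin n) (Fin n) ℝ) - ((1 - τ) / lam) • (Lᵀ * L)).PosDef ∧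
    (L * matFun ((1 : Matrix (Fin n) (Fin n) ℝ) - ((1 - τ) / lam) • (Lᵀ * L))
        (fun x => x ^ (1 / (τ - 1))) * Lᵀ).PosDef ∧
    (L * matFun ((1 : Matrix (Fin n) (Fin n) ℝ) - ((1 - τ) / lam) • (Lᵀ * L))
        (fun x => x ^ (1 / (τ - 1))) * Lᵀ - P).PosDef :=
  least_favorable_cov_posdef_general P L hfac hP τ hτ1 lam hlam
end

section
/- Fix τ ∈ (0,1), a symmetric positive definite P ∈ ℝ^{n×n}, and c > 0. Then there exists a unique λ > (1−τ)‖P‖ such that Σᵢ₌₁ⁿ γ(λ, dᵢ) = c, where d₁ ≥ ⋯ ≥ dₙ > 0 are the eigenvalues of P and γ(λ, d) = (1/(τ(τ−1)))(1 − ((1−τ)/λ)d)^{τ/(τ−1)} + (1/(1−τ))(1 − ((1−τ)/λ)d)^{1/(τ−1)} + 1/τ. -/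
open Matrix

/-!
Write `x = 1 - (1 - τ) d / λ`, so that `γ(λ, d) = ψ(x)` with `ψ = gammaProfile τ`. With
`q = 1 / (τ - 1)` one has `ψ(1) = 0` and `ψ'(x) = x ^ (q - 1) (x - 1) / (τ - 1) ^ 2 < 0` on
`(0, 1)`, and `ψ(x) = x ^ q (x / (τ (τ - 1)) + 1 / (1 - τ)) + 1 / τ → ∞` as `x → 0⁺` because `q < 0`.
For `λ > (1 - τ) ‖P‖` every `xᵢ` lies in `(0, 1)` and increases with `λ`, so the sum is continuous
and strictly decreasing there; it tends to `0` as `λ → ∞`, and to `∞` as `λ ↓ (1 - τ) ‖P‖`, since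
its term for the top eigenvalue does. The intermediate value theorem gives a solution, strict
monotonicity its uniqueness.
-/

open Filter Set Topology

noncomputable def gammaProfile (τ x : ℝ) : ℝ :=
  1 / (τ * (τ - 1)) * x ^ (τ / (τ - 1)) + 1 / (1 - τ) * x ^ (1 / (τ - 1)) + 1 / τ

section gammaProfile

variable {τ : ℝ}

theorem gammaProfile_one (hτ0 : τ ≠ 0) (hτ1 : τ ≠ 1) : gammaProfile τ 1 = 0 := by
  have : τ - 1 ≠ 0 := sub_ne_zero.mpr hτ1
  have : 1 - τ ≠ 0 := sub_ne_zero.mpr hτ1.symm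
  simp only [gammaProfile, Real.one_rpow, mul_one]
  field_simp
  ring

theorem gammaProfile_eq_rpow_mul (hτ1 : τ ≠ 1) {x : ℝ} (hx : 0 < x) :
    gammaProfile τ x =
      x ^ (1 / (τ - 1)) * (1 / (τ * (τ - 1)) * x + 1 / (1 - τ)) + 1 / τ := by
  have hexp : τ / (τ - 1) = 1 / (τ - 1) + 1 := by
    field_simp [sub_ne_zero.mpr hτ1]
    ring
  rw [gammaProfile, hexp, Real.rpow_add hx, Real.rpow_one]
  ring

theorem continuousAt_gammaProfile {x : ℝ} (hx : x ≠ 0) : ContinuousAt (gammaProfile τ) x := by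
  unfold gammaProfile
  fun_prop (disch := exact Or.inl hx)

theorem hasDerivAt_gammaProfile (hτ0 : τ ≠ 0) (hτ1 : τ ≠ 1) {x : ℝ} (hx : 0 < x) :
    HasDerivAt (gammaProfile τ)
      ((x ^ (1 / (τ - 1)) - x ^ (1 / (τ - 1) - 1)) / (τ - 1) ^ 2) x := by
  have h1 : τ - 1 ≠ 0 := sub_ne_zero.mpr hτ1
  have h2 : 1 - τ ≠ 0 := sub_ne_zero.mpr hτ1.symm
  have hexp : τ / (τ - 1) - 1 = 1 / (τ - 1) := by
    field_simp
    ring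
  refine (((Real.hasDerivAt_rpow_const (p := τ / (τ - 1)) (Or.inl hx.ne')).const_mul
    (1 / (τ * (τ - 1)))).add ((Real.hasDerivAt_rpow_const (p := 1 / (τ - 1))
      (Or.inl hx.ne')).const_mul (1 / (1 - τ)))).add_const (1 / τ) |>.congr_deriv ?_
  rw [hexp]
  field_simp
  ring

theorem strictAntiOn_gammaProfile (hτ0 : τ ≠ 0) (hτ1 : τ ≠ 1) :
    StrictAntiOn (gammaProfile τ) (Ioc 0 1) := by
  refine strictAntiOn_of_deriv_neg (convex_Ioc 0 1)
    (fun x hx => (continuousAt_gammaProfile hx.1.ne').continuousWithinAt) fun x hx => ?_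
  rw [interior_Ioc] at hx
  rw [(hasDerivAt_gammaProfile hτ0 hτ1 hx.1).deriv]
  have hpow : x ^ (1 / (τ - 1)) = x ^ (1 / (τ - 1) - 1) * x := by
    rw [← Real.rpow_add_one hx.1.ne', sub_add_cancel]
  rw [hpow]
  exact div_neg_of_neg_of_pos (by nlinarith [Real.rpow_pos_of_pos hx.1 (1 / (τ - 1) - 1), hx.2])
    (by positivity)

theorem gammaProfile_pos (hτ0 : τ ≠ 0) (hτ1 : τ ≠ 1) {x : ℝ} (hx : x ∈ Ioo 0 1) :
    0 < gammaProfile τ x := by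
  simpa [gammaProfile_one hτ0 hτ1] using
    strictAntiOn_gammaProfile hτ0 hτ1 (Ioo_subset_Ioc_self hx) (right_mem_Ioc.mpr one_pos) hx.2

theorem tendsto_gammaProfile_nhdsGT_zero (hτ1 : τ < 1) :
    Tendsto (gammaProfile τ) (𝓝[>] 0) atTop := by
  have hcont : Continuous fun x : ℝ => 1 / (τ * (τ - 1)) * x + 1 / (1 - τ) := by fun_prop
  have hlin := tendsto_nhdsWithin_of_tendsto_nhds (s := Ioi 0) (hcont.tendsto 0)
  simp only [mul_zero, zero_add] at hlin
  refine (tendsto_atTop_add_const_right _ (1 / τ) <|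
    (tendsto_rpow_neg_nhdsGT_zero (y := 1 / (τ - 1)) (by simpa [sub_neg])).atTop_mul_pos
      (by simpa [sub_pos]) hlin).congr' ?_
  filter_upwards [self_mem_nhdsWithin] with x hx
  exact (gammaProfile_eq_rpow_mul hτ1.ne hx).symm

end gammaProfile

theorem one_sub_div_mul_mem_Ioo {κ d M lam : ℝ} (hκ : 0 < κ) (hd : 0 < d) (hdM : d ≤ M)
    (hlam : κ * M < lam) : 1 - κ / lam * d ∈ Ioo 0 1 := by
  have hlam0 : 0 < lam := (mul_pos hκ (hd.trans_le hdM)).trans hlam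
  have hlt : κ / lam * d < 1 := by
    rw [div_mul_eq_mul_div, div_lt_one hlam0]
    exact (mul_le_mul_of_nonneg_left hdM hκ.le).trans_lt hlam
  constructor <;> nlinarith [mul_pos (div_pos hκ hlam0) hd]

theorem strictMonoOn_one_sub_div_mul {κ d : ℝ} (hκ : 0 < κ) (hd : 0 < d) :
    StrictMonoOn (fun lam => 1 - κ / lam * d) (Ioi 0) := fun _ h₁ _ _ h₁₂ => by
  simpa using mul_lt_mul_of_pos_right (div_lt_div_of_pos_left hκ h₁ h₁₂) hd

theorem existsUnique_eq_of_strictAntiOn_Ioi {F : ℝ → ℝ} {a l c : ℝ}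
    (hcont : ContinuousOn F (Ioi a)) (hanti : StrictAntiOn F (Ioi a))
    (hleft : Tendsto F (𝓝[>] a) atTop) (hright : Tendsto F atTop (𝓝 l)) (hc : l < c) :
    ∃! x, a < x ∧ F x = c := by
  obtain ⟨x, hx, hFx⟩ := isPreconnected_Ioi.intermediate_value_Ioi (l₂ := 𝓝[>] a)
    (le_principal_iff.mpr (Ioi_mem_atTop a)) (le_principal_iff.mpr self_mem_nhdsWithin) hcont
    hright hleft hc
  exact ⟨x, ⟨hx, hFx⟩, fun y ⟨hy, hFy⟩ => hanti.injOn hy hx (hFy.trans hFx.symm)⟩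

noncomputable def multiplierSum {ι : Type*} [Fintype ι] (τ : ℝ) (d : ι → ℝ) (lam : ℝ) : ℝ :=
  ∑ i, gammaProfile τ (1 - (1 - τ) / lam * d i)

section multiplierSum

variable {ι : Type*} [Fintype ι] {τ M : ℝ} {d : ι → ℝ}

theorem continuousOn_multiplierSum (hτ1 : τ < 1) (hd : ∀ i, 0 < d i) (hM : ∀ i, d i ≤ M) :
    ContinuousOn (multiplierSum τ d) (Ioi ((1 - τ) * M)) := by
  refine continuousOn_finsetSum _ fun i _ lam hlam => ContinuousAt.continuousWithinAt ?_
  have hx := one_sub_div_mul_mem_Ioo (sub_pos.mpr hτ1) (hd i) (hM i) hlam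
  have hlam0 : lam ≠ 0 := by
    rintro rfl
    simp at hx
  exact (continuousAt_gammaProfile hx.1.ne').comp (f := fun lam => 1 - (1 - τ) / lam * d i)
    (by fun_prop (disch := exact hlam0))

theorem strictAntiOn_multiplierSum [Nonempty ι] (hτ0 : τ ≠ 0) (hτ1 : τ < 1)
    (hd : ∀ i, 0 < d i) (hM : ∀ i, d i ≤ M) :
    StrictAntiOn (multiplierSum τ d) (Ioi ((1 - τ) * M)) := by
  intro lam₁ h₁ lam₂ h₂ h₁₂
  have hτ : 0 < 1 - τ := sub_pos.mpr hτ1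
  refine Finset.sum_lt_sum_of_nonempty Finset.univ_nonempty fun i _ => ?_
  have hx₁ := one_sub_div_mul_mem_Ioo hτ (hd i) (hM i) h₁
  have hx₂ := one_sub_div_mul_mem_Ioo hτ (hd i) (hM i) h₂
  have hpos : 0 < (1 - τ) * M := mul_pos hτ ((hd i).trans_le (hM i))
  exact strictAntiOn_gammaProfile hτ0 hτ1.ne (Ioo_subset_Ioc_self hx₁) (Ioo_subset_Ioc_self hx₂)
    (strictMonoOn_one_sub_div_mul hτ (hd i) (hpos.trans h₁) (hpos.trans h₂) h₁₂)

theorem tendsto_multiplierSum_atTop (hτ0 : τ ≠ 0) (hτ1 : τ ≠ 1) :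
    Tendsto (multiplierSum τ d) atTop (𝓝 0) := by
  have hone : ∀ i, Tendsto (fun lam => 1 - (1 - τ) / lam * d i) atTop (𝓝 1) := fun i => by
    simpa [div_eq_mul_inv] using
      tendsto_const_nhds.sub ((tendsto_inv_atTop_zero.const_mul (1 - τ)).mul_const (d i))
  have h := tendsto_finsetSum Finset.univ fun i _ =>
    (continuousAt_gammaProfile (τ := τ) one_ne_zero).tendsto.comp (hone i)
  rwa [Finset.sum_congr rfl fun _ _ => gammaProfile_one hτ0 hτ1, Finset.sum_const_zero] at h

theorem tendsto_multiplierSum_nhdsGT (hτ0 : τ ≠ 0) (hτ1 : τ < 1) (hd : ∀ i, 0 < d i) {i₀ : ι}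
    (hM : ∀ i, d i ≤ d i₀) :
    Tendsto (multiplierSum τ d) (𝓝[>] ((1 - τ) * d i₀)) atTop := by
  have hτ : 0 < 1 - τ := sub_pos.mpr hτ1
  have hmem : ∀ i, ∀ lam ∈ Ioi ((1 - τ) * d i₀), 1 - (1 - τ) / lam * d i ∈ Ioo 0 1 :=
    fun i lam hlam => one_sub_div_mul_mem_Ioo hτ (hd i) (hM i) hlam
  have hx₀ : Tendsto (fun lam => 1 - (1 - τ) / lam * d i₀) (𝓝[>] ((1 - τ) * d i₀)) (𝓝[>] 0) := by
    refine tendsto_nhdsWithin_iff.mpr ⟨?_, eventually_nhdsWithin_of_forall fun lam hlam =>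
      (hmem i₀ lam hlam).1⟩
    have ha : (1 - τ) * d i₀ ≠ 0 := (mul_pos hτ (hd i₀)).ne'
    have hcont : ContinuousAt (fun lam => 1 - (1 - τ) / lam * d i₀) ((1 - τ) * d i₀) := by
      fun_prop (disch := exact ha)
    convert hcont.tendsto.mono_left nhdsWithin_le_nhds using 2
    field_simp [(hd i₀).ne']
    ring
  refine tendsto_atTop_mono' _ (eventually_nhdsWithin_of_forall fun lam hlam => ?_)
    ((tendsto_gammaProfile_nhdsGT_zero hτ1).comp hx₀)
  exact Finset.single_le_sum (f := fun i => gammaProfile τ (1 - (1 - τ) / lam * d i))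
    (fun i _ => (gammaProfile_pos hτ0 hτ1.ne (hmem i lam hlam)).le) (Finset.mem_univ i₀)

end multiplierSum

/-- Existence and uniqueness of the Lagrange multiplier: for `τ ∈ (0,1)`,
`P` symmetric positive definite and `c > 0`, there is a unique
`λ > (1−τ)‖P‖` with `∑ᵢ γ(λ, dᵢ) = c`, where `dᵢ` are the eigenvalues of `P`. -/
theorem lagrange_multiplier_exists_unique {n : ℕ} (hn : 0 < n)
    (P : Matrix (Fin n) (Fin n) ℝ) (hP : P.PosDef) (τ c : ℝ)
    (hτ0 : 0 < τ) (hτ1 : τ < 1) (hc : 0 < c) :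
    ∃! lam : ℝ, (1 - τ) * specNorm P < lam ∧
      ∑ i : Fin n,
        ((1 / (τ * (τ - 1))) * (1 - ((1 - τ) / lam) * hP.1.eigenvalues i) ^ (τ / (τ - 1)) +
         (1 / (1 - τ)) * (1 - ((1 - τ) / lam) * hP.1.eigenvalues i) ^ (1 / (τ - 1)) + 1 / τ)
        = c := by
  have : Nonempty (Fin n) := ⟨⟨0, hn⟩⟩
  set d := hP.1.eigenvalues
  have hd : ∀ i, 0 < d i := hP.eigenvalues_pos
  obtain ⟨i₀, hi₀⟩ := exists_eq_ciSup_of_finite (f := d)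
  have hM : ∀ i, d i ≤ d i₀ := fun i => hi₀ ▸ le_ciSup (finite_range d).bddAbove i
  have hspec : specNorm P = d i₀ := by rw [specNorm, dif_pos hP.1, hi₀]
  rw [hspec]
  exact existsUnique_eq_of_strictAntiOn_Ioi (continuousOn_multiplierSum hτ1 hd hM)
    (strictAntiOn_multiplierSum hτ0.ne' hτ1 hd hM) (tendsto_multiplierSum_nhdsGT hτ0.ne' hτ1 hd hM)
    (tendsto_multiplierSum_atTop hτ0.ne' hτ1.ne) hc
end

section
/- Let K_e ∈ ℝ^{n×n} be symmetric positive semidefinite, m_e ∈ ℝⁿ, τ ∈ (0,1), and λ > (1−τ)‖K_e‖. Define the τ entropy H_τ(m_e, K_e, λ) = m_eᵀ (I_n − ((1−τ)/λ) K_e)^{-1} m_e + (λ/τ) tr((I_n − ((1−τ)/λ) K_e)^{τ/(τ−1)} − I_n). Then H_τ ≥ 0, with equality if and only if m_e = 0 and K_e = 0. -/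
/-!
With `A = I − ((1−τ)/λ) K_e`, the spectrum of `A` is the image of that of `K_e` under
`μ ↦ 1 − ((1−τ)/λ) μ`, and the bound on `λ` puts it in `(0, 1]`. So `A⁻¹` is positive definite,
which handles the quadratic term, and the trace term is `(λ/τ) ∑ (ν^{τ/(τ−1)} − 1)` over the
eigenvalues `ν` of `A`: the exponent is negative, so every summand is nonnegative and vanishes
only at `ν = 1`, i.e. only when the corresponding eigenvalue of `K_e` is `0`.
-/

open Matrix

namespace Matrix

section

variable {ι : Type*} [Fintype ι]

lemma PosDef.dotProduct_mulVec_self_eq_zero_iff {B : Matrix ι ι ℝ} (hB : B.PosDef)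
    {x : ι → ℝ} : x ⬝ᵥ B *ᵥ x = 0 ↔ x = 0 := by
  refine ⟨fun h => by_contra fun hx => ?_, fun h => by rw [h, zero_dotProduct]⟩
  simpa [h] using hB.dotProduct_mulVec_pos hx

variable [DecidableEq ι]

open scoped Pointwise in
lemma IsHermitian.range_eigenvalues_one_sub_smul {K : Matrix ι ι ℝ} (hK : K.IsHermitian)
    {c : ℝ} (hc : c ≠ 0) (hA : (1 - c • K).IsHermitian) :
    Set.range hA.eigenvalues = (fun μ => 1 - c * μ) '' Set.range hK.eigenvalues := by
  have hσ : spectrum ℝ (1 - c • K) = {1} - Units.mk0 c hc • spectrum ℝ K := by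
    rw [← spectrum.unit_smul_eq_smul, spectrum.singleton_sub_eq, map_one]
    rfl
  rw [← hA.spectrum_real_eq_range_eigenvalues, ← hK.spectrum_real_eq_range_eigenvalues, hσ,
    Set.singleton_sub, ← Set.image_smul, Set.image_image]
  rfl

lemma IsHermitian.eigenvalues_one_sub_smul_eq_one_iff {K : Matrix ι ι ℝ} (hK : K.IsHermitian)
    {c : ℝ} (hc : c ≠ 0) (hA : (1 - c • K).IsHermitian) :
    (∀ j, hA.eigenvalues j = 1) ↔ K = 0 := by
  rw [← hK.eigenvalues_eq_zero_iff, funext_iff, ← Set.forall_mem_range (p := (· = (1 : ℝ))),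
    hK.range_eigenvalues_one_sub_smul hc hA, Set.forall_mem_image, Set.forall_mem_range]
  simp [hc]

lemma PosSemidef.eigenvalues_one_sub_smul_mem_Ioc {K : Matrix ι ι ℝ} (hK : K.PosSemidef)
    {c : ℝ} (hc : 0 < c) (hcK : ∀ i, c * hK.1.eigenvalues i < 1)
    (hA : (1 - c • K).IsHermitian) (j : ι) : hA.eigenvalues j ∈ Set.Ioc 0 1 := by
  obtain ⟨_, ⟨i, rfl⟩, hi⟩ :=
    hK.1.range_eigenvalues_one_sub_smul hc.ne' hA ▸ Set.mem_range_self j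
  rw [← hi]
  exact ⟨by linarith [hcK i], by nlinarith [hK.eigenvalues_nonneg i]⟩

end

section

variable {n : ℕ}

lemma IsHermitian.eigenvalues_le_specNorm_s12 {A : Matrix (Fin n) (Fin n) ℝ}
    (hA : A.IsHermitian) (i : Fin n) : hA.eigenvalues i ≤ specNorm A := by
  rw [specNorm, dif_pos hA]
  exact le_ciSup (Set.finite_range _).bddAbove i

lemma PosSemidef.specNorm_nonneg {A : Matrix (Fin n) (Fin n) ℝ} (hA : A.PosSemidef) :
    0 ≤ specNorm A := by
  rcases isEmpty_or_nonempty (Fin n) with _ | ⟨⟨i⟩⟩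
  · simp [specNorm]
  · exact (hA.eigenvalues_nonneg i).trans (hA.1.eigenvalues_le_specNorm_s12 i)

lemma IsHermitian.trace_matFun_sub_one {A : Matrix (Fin n) (Fin n) ℝ}
    (hA : A.IsHermitian) (f : ℝ → ℝ) :
    (matFun A f - 1).trace = ∑ j, (f (hA.eigenvalues j) - 1) := by
  rw [trace_sub, trace_one, matFun, dif_pos hA, trace_mul_cycle,
    mem_unitaryGroup_iff'.mp hA.eigenvectorUnitary.2, one_mul, trace_diagonal,
    Finset.sum_sub_distrib]
  simp

variable {A : Matrix (Fin n) (Fin n) ℝ} (hA : A.IsHermitian)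
  (hν : ∀ j, hA.eigenvalues j ∈ Set.Ioc 0 1) {p : ℝ}
include hA hν

lemma IsHermitian.trace_matFun_rpow_sub_one_nonneg (hp : p ≤ 0) :
    0 ≤ (matFun A (· ^ p) - 1).trace := by
  rw [hA.trace_matFun_sub_one]
  exact Finset.sum_nonneg fun j _ =>
    sub_nonneg.2 (Real.one_le_rpow_of_pos_of_le_one_of_nonpos (hν j).1 (hν j).2 hp)

lemma IsHermitian.trace_matFun_rpow_sub_one_eq_zero_iff (hp : p < 0) :
    (matFun A (· ^ p) - 1).trace = 0 ↔ ∀ j, hA.eigenvalues j = 1 := by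
  rw [hA.trace_matFun_sub_one, Finset.sum_eq_zero_iff_of_nonneg fun j _ =>
    sub_nonneg.2 (Real.one_le_rpow_of_pos_of_le_one_of_nonpos (hν j).1 (hν j).2 hp.le)]
  refine forall_congr' fun j => ⟨fun h => by_contra fun hj => ?_, fun h => by simp [h]⟩
  have := Real.one_lt_rpow_of_pos_of_lt_one_of_neg (hν j).1 (lt_of_le_of_ne (hν j).2 hj) hp
  linarith [h (Finset.mem_univ j)]

end

end Matrix

/-- The τ entropy
`H_τ(m_e, K_e, λ) = m_eᵀ (I − ((1−τ)/λ)K_e)⁻¹ m_e + (λ/τ) tr((I − ((1−τ)/λ)K_e)^{τ/(τ−1)} − I)`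
is nonnegative for `λ > (1−τ)‖K_e‖`, and vanishes iff `m_e = 0` and `K_e = 0`. -/
theorem tau_entropy_nonneg_eq_zero_iff {n : ℕ} (Ke : Matrix (Fin n) (Fin n) ℝ)
    (hKe : Ke.PosSemidef) (me : Fin n → ℝ) (τ lam : ℝ)
    (hτ0 : 0 < τ) (hτ1 : τ < 1) (hlam : (1 - τ) * specNorm Ke < lam) :
    0 ≤ me ⬝ᵥ (((1 : Matrix (Fin n) (Fin n) ℝ) - ((1 - τ) / lam) • Ke)⁻¹ *ᵥ me) +
        (lam / τ) * (matFun ((1 : Matrix (Fin n) (Fin n) ℝ) - ((1 - τ) / lam) • Ke)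
            (fun x => x ^ (τ / (τ - 1))) - 1).trace ∧
    (me ⬝ᵥ (((1 : Matrix (Fin n) (Fin n) ℝ) - ((1 - τ) / lam) • Ke)⁻¹ *ᵥ me) +
        (lam / τ) * (matFun ((1 : Matrix (Fin n) (Fin n) ℝ) - ((1 - τ) / lam) • Ke)
            (fun x => x ^ (τ / (τ - 1))) - 1).trace = 0 ↔ me = 0 ∧ Ke = 0) := by
  set c := (1 - τ) / lam
  have hlam0 : 0 < lam := (mul_nonneg (by linarith) hKe.specNorm_nonneg).trans_lt hlam
  have hc : 0 < c := div_pos (by linarith) hlam0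
  have hcK (i : Fin n) : c * hKe.1.eigenvalues i < 1 :=
    calc c * _ ≤ c * specNorm Ke :=
          mul_le_mul_of_nonneg_left (hKe.1.eigenvalues_le_specNorm_s12 i) hc.le
      _ < 1 := by rwa [div_mul_eq_mul_div, div_lt_one hlam0]
  have hA : (1 - c • Ke).IsHermitian := isHermitian_one.sub (hKe.1.smul (.all c))
  have hν := hKe.eigenvalues_one_sub_smul_mem_Ioc hc hcK hA
  have hApd : (1 - c • Ke).PosDef := hA.posDef_iff_eigenvalues_pos.2 fun j => (hν j).1
  have hp : τ / (τ - 1) < 0 := div_neg_of_pos_of_neg hτ0 (by linarith)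
  have hlamτ : 0 < lam / τ := div_pos hlam0 hτ0
  have hQ : 0 ≤ me ⬝ᵥ ((1 - c • Ke)⁻¹ *ᵥ me) := by
    simpa using hApd.inv.posSemidef.dotProduct_mulVec_nonneg me
  have hT : 0 ≤ lam / τ * (matFun (1 - c • Ke) (· ^ (τ / (τ - 1))) - 1).trace :=
    mul_nonneg hlamτ.le (hA.trace_matFun_rpow_sub_one_nonneg hν hp.le)
  refine ⟨add_nonneg hQ hT, ?_⟩
  rw [add_eq_zero_iff_of_nonneg hQ hT, hApd.inv.dotProduct_mulVec_self_eq_zero_iff, mul_eq_zero,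
    or_iff_right hlamτ.ne', hA.trace_matFun_rpow_sub_one_eq_zero_iff hν hp,
    hKe.1.eigenvalues_one_sub_smul_eq_one_iff hc.ne' hA]
end

section
/- Let K_e ∈ ℝ^{n×n} be symmetric positive semidefinite and nonzero, m_e ∈ ℝⁿ, and τ ∈ (0,1). Then the function λ ↦ H_τ(m_e, K_e, λ) = m_eᵀ (I − ((1−τ)/λ) K_e)^{-1} m_e + (λ/τ) tr((I − ((1−τ)/λ) K_e)^{τ/(τ−1)} − I) is monotone decreasing on the interval λ ∈ ((1−τ)‖K_e‖, ∞). -/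
/-!
Diagonalising `K_e = U diag(μ) Uᵀ` splits `H_τ(m_e, K_e, λ)` into a sum over the eigenvalues of
`w * (1 - a/λ)⁻¹ + (λ/τ) * ((1 - a/λ)^p - 1)` with `a = (1-τ)μ ≥ 0`, `w = (Uᵀ m_e)ᵢ² ≥ 0` and
`p = τ/(τ-1) < 0`. The first term decreases because `1 - a/λ` increases. The second term is
`-a/τ` times the slope of the convex function `u ↦ u^p` between `1` and `1 - a/λ`; since slopes
of a convex function increase, it decreases as well.
-/

open Matrix

open Set

theorem convexOn_rpow_of_nonpos {p : ℝ} (hp : p ≤ 0) :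
    ConvexOn ℝ (Ioi 0) fun x : ℝ => x ^ p := by
  refine MonotoneOn.convexOn_of_deriv (convex_Ioi 0) ?_ ?_ ?_
  · exact fun x hx => (Real.continuousAt_rpow_const _ _ (Or.inl hx.ne')).continuousWithinAt
  · rw [interior_Ioi]
    exact fun x hx => (Real.differentiableAt_rpow_const_of_ne p hx.ne').differentiableWithinAt
  · rw [interior_Ioi, Real.deriv_rpow_const']
    exact fun x hx y _ hxy =>
      mul_le_mul_of_nonpos_left (Real.rpow_le_rpow_of_nonpos hx hxy (by linarith)) hp

theorem antitoneOn_inv_one_sub_div {a : ℝ} (ha : 0 ≤ a) :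
    AntitoneOn (fun l : ℝ => (1 - a / l)⁻¹) (Ioi a) := by
  intro x hx y _ hxy
  have hx0 : 0 < x := ha.trans_lt hx
  have hux : 0 < 1 - a / x := by rw [sub_pos, div_lt_one hx0]; exact hx
  exact inv_anti₀ hux (by gcongr)

theorem ConvexOn.antitoneOn_mul_sub_one_sub_div {φ : ℝ → ℝ} (hφ : ConvexOn ℝ (Ioi 0) φ)
    {a : ℝ} (ha : 0 ≤ a) : AntitoneOn (fun l : ℝ => l * (φ (1 - a / l) - φ 1)) (Ioi a) := by
  rcases ha.eq_or_lt with rfl | ha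
  · intro x _ y _ _
    simp
  have hslope : ∀ l ∈ Ioi a,
      l * (φ (1 - a / l) - φ 1) = -a * ((φ (1 - a / l) - φ 1) / (1 - a / l - 1)) := by
    intro l hl
    have hl0 : 0 < l := ha.trans hl
    rw [show 1 - a / l - 1 = -(a / l) by ring, div_neg, div_div_eq_mul_div]
    field_simp
  have hmem : ∀ l ∈ Ioi a, 1 - a / l ∈ Ioi 0 := fun l hl => by
    rw [mem_Ioi, sub_pos, div_lt_one (ha.trans hl)]
    exact hl
  have hne : ∀ l ∈ Ioi a, 1 - a / l ≠ 1 := fun l hl => by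
    have := div_pos ha (ha.trans hl)
    linarith
  intro x hx y hy hxy
  have hu : 1 - a / x ≤ 1 - a / y := by
    have := ha.trans hx
    gcongr
  dsimp only
  rw [hslope x hx, hslope y hy]
  exact mul_le_mul_of_nonpos_left
    (hφ.secant_mono (mem_Ioi.2 one_pos) (hmem x hx) (hmem y hy) (hne x hx) (hne y hy) hu)
    (by linarith)

theorem antitoneOn_mul_inv_one_sub_div_add_div_mul_rpow {w a t p : ℝ} (hw : 0 ≤ w)
    (ha : 0 ≤ a) (ht : 0 ≤ t) (hp : p ≤ 0) :
    AntitoneOn (fun l : ℝ => w * (1 - a / l)⁻¹ + l / t * ((1 - a / l) ^ p - 1)) (Ioi a) := by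
  refine (((monotone_mul_left_of_nonneg hw).comp_antitoneOn (antitoneOn_inv_one_sub_div ha)).add
    ((monotone_mul_left_of_nonneg (inv_nonneg.2 ht)).comp_antitoneOn
      ((convexOn_rpow_of_nonpos hp).antitoneOn_mul_sub_one_sub_div ha))).congr fun l _ => ?_
  simp only [Function.comp_apply, Real.one_rpow]
  ring

theorem matFun_eq_cfc {n : ℕ} {A : Matrix (Fin n) (Fin n) ℝ} (hA : A.IsHermitian)
    (f : ℝ → ℝ) : matFun A f = cfc f A := by
  rw [matFun, dif_pos hA, hA.cfc_eq, IsHermitian.cfc, Unitary.conjStarAlgAut_apply]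
  rfl

theorem Matrix.IsHermitian.eigenvalues_le_specNorm_s13 {n : ℕ} {A : Matrix (Fin n) (Fin n) ℝ}
    (hA : A.IsHermitian) (i : Fin n) : hA.eigenvalues i ≤ specNorm A := by
  rw [specNorm, dif_pos hA]
  exact le_ciSup (finite_range _).bddAbove i

theorem Matrix.PosSemidef.specNorm_nonneg_s13 {n : ℕ} {A : Matrix (Fin n) (Fin n) ℝ}
    (hA : A.PosSemidef) : 0 ≤ specNorm A := by
  rw [specNorm, dif_pos hA.isHermitian]
  exact Real.iSup_nonneg hA.eigenvalues_nonneg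

namespace Matrix.IsHermitian

variable {𝕜 n : Type*} [RCLike 𝕜] [Fintype n] [DecidableEq n]

theorem trace_cfc {A : Matrix n n 𝕜} (hA : A.IsHermitian) (f : ℝ → ℝ) :
    (cfc f A).trace = ∑ i, (f (hA.eigenvalues i) : 𝕜) := by
  rw [hA.cfc_eq, IsHermitian.cfc, Unitary.conjStarAlgAut_apply, trace_mul_comm, ← mul_assoc,
    Unitary.star_mul_self_of_mem (SetLike.coe_mem _), one_mul, trace_diagonal]
  rfl

theorem dotProduct_cfc_mulVec {A : Matrix n n ℝ} (hA : A.IsHermitian) (f : ℝ → ℝ) (x : n → ℝ) :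
    x ⬝ᵥ cfc f A *ᵥ x =
      ∑ i, f (hA.eigenvalues i) * (star (hA.eigenvectorUnitary : Matrix n n ℝ) *ᵥ x) i ^ 2 := by
  rw [hA.cfc_eq, IsHermitian.cfc, Unitary.conjStarAlgAut_apply, ← mulVec_mulVec, ← mulVec_mulVec,
    dotProduct_mulVec, star_eq_conjTranspose, conjTranspose_eq_transpose_of_trivial,
    ← mulVec_transpose]
  simp [dotProduct, mulVec_diagonal, sq, mul_left_comm]

theorem one_sub_smul_eq_cfc {A : Matrix n n 𝕜} (hA : A.IsHermitian) (c : ℝ) :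
    1 - c • A = cfc (fun x => 1 - c * x) A := by
  rw [cfc_sub _ _ A, cfc_const_one ℝ A]
  exact congrArg (1 - ·) (cfc_const_mul_id c A hA).symm

theorem dotProduct_inv_one_sub_smul_mulVec {A : Matrix n n ℝ} (hA : A.IsHermitian) {c : ℝ}
    (hc : ∀ i, 1 - c * hA.eigenvalues i ≠ 0) (x : n → ℝ) :
    x ⬝ᵥ (1 - c • A)⁻¹ *ᵥ x = ∑ i,
      (1 - c * hA.eigenvalues i)⁻¹ * (star (hA.eigenvectorUnitary : Matrix n n ℝ) *ᵥ x) i ^ 2 := by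
  have hc' : ∀ y ∈ spectrum ℝ A, 1 - c * y ≠ 0 := by
    rw [hA.spectrum_real_eq_range_eigenvalues]
    rintro _ ⟨i, rfl⟩
    exact hc i
  rw [hA.one_sub_smul_eq_cfc, nonsing_inv_eq_ringInverse, ← cfc_inv _ _ hc',
    hA.dotProduct_cfc_mulVec]

end Matrix.IsHermitian

theorem Matrix.IsHermitian.trace_matFun_one_sub_smul_sub_one {n : ℕ}
    {A : Matrix (Fin n) (Fin n) ℝ} (hA : A.IsHermitian) (c : ℝ) (f : ℝ → ℝ) :
    (matFun (1 - c • A) f - 1).trace = ∑ i, (f (1 - c * hA.eigenvalues i) - 1) := by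
  rw [hA.one_sub_smul_eq_cfc, matFun_eq_cfc (IsSelfAdjoint.isHermitian (cfc_predicate _ _)),
    ← cfc_comp' f _ _ ((A.finite_real_spectrum.image _).continuousOn _), ← cfc_const_one ℝ A,
    ← cfc_sub _ _ A (A.finite_real_spectrum.continuousOn _), hA.trace_cfc]
  rfl

theorem tau_entropy_antitone_general {n : ℕ} (Ke : Matrix (Fin n) (Fin n) ℝ)
    (hKe : Ke.PosSemidef) (me : Fin n → ℝ) (τ : ℝ)
    (hτ0 : 0 < τ) (hτ1 : τ < 1) :
    AntitoneOn (fun lam : ℝ =>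
        me ⬝ᵥ (((1 : Matrix (Fin n) (Fin n) ℝ) - ((1 - τ) / lam) • Ke)⁻¹ *ᵥ me) +
        (lam / τ) * (matFun ((1 : Matrix (Fin n) (Fin n) ℝ) - ((1 - τ) / lam) • Ke)
            (fun x => x ^ (τ / (τ - 1))) - 1).trace)
      (Set.Ioi ((1 - τ) * specNorm Ke)) := by
  have hK := hKe.isHermitian
  set a : Fin n → ℝ := fun i => (1 - τ) * hK.eigenvalues i
  set w : Fin n → ℝ := fun i => (star (hK.eigenvectorUnitary : Matrix _ _ ℝ) *ᵥ me) i ^ 2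
  have ha : ∀ i, 0 ≤ a i := fun i => mul_nonneg (by linarith) (hKe.eigenvalues_nonneg i)
  have ha_le : ∀ i, a i ≤ (1 - τ) * specNorm Ke := fun i =>
    mul_le_mul_of_nonneg_left (hK.eigenvalues_le_specNorm_s13 i) (by linarith)
  have hp : τ / (τ - 1) ≤ 0 := div_nonpos_of_nonneg_of_nonpos hτ0.le (by linarith)
  refine AntitoneOn.congr (f₁ := fun l => ∑ i,
      (w i * (1 - a i / l)⁻¹ + l / τ * ((1 - a i / l) ^ (τ / (τ - 1)) - 1)))
    (fun x hx y hy hxy => Finset.sum_le_sum fun i _ =>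
      (antitoneOn_mul_inv_one_sub_div_add_div_mul_rpow (sq_nonneg _) (ha i) hτ0.le hp).mono
        (Ioi_subset_Ioi (ha_le i)) hx hy hxy) fun l hl => ?_
  have hl0 : 0 < l := (mul_nonneg (by linarith) hKe.specNorm_nonneg_s13).trans_lt hl
  have hca : ∀ i, (1 - τ) / l * hK.eigenvalues i = a i / l := fun i => div_mul_eq_mul_div _ _ _
  have hne : ∀ i, 1 - (1 - τ) / l * hK.eigenvalues i ≠ 0 := fun i => by
    rw [hca, sub_ne_zero, ne_comm, Ne, div_eq_one_iff_eq hl0.ne']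
    exact ((ha_le i).trans_lt hl).ne
  simp only [hK.dotProduct_inv_one_sub_smul_mulVec hne, hK.trace_matFun_one_sub_smul_sub_one,
    Finset.mul_sum, ← Finset.sum_add_distrib, hca]
  exact Finset.sum_congr rfl fun i _ => by ring

/-- The τ entropy `H_τ(m_e, K_e, ·)` is a monotone decreasing function of the
parameter `λ` on the interval `((1−τ)‖K_e‖, ∞)`. -/
theorem tau_entropy_antitone {n : ℕ} (Ke : Matrix (Fin n) (Fin n) ℝ)
    (hKe : Ke.PosSemidef) (hKe0 : Ke ≠ 0) (me : Fin n → ℝ) (τ : ℝ)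
    (hτ0 : 0 < τ) (hτ1 : τ < 1) :
    AntitoneOn (fun lam : ℝ =>
        me ⬝ᵥ (((1 : Matrix (Fin n) (Fin n) ℝ) - ((1 - τ) / lam) • Ke)⁻¹ *ᵥ me) +
        (lam / τ) * (matFun ((1 : Matrix (Fin n) (Fin n) ℝ) - ((1 - τ) / lam) • Ke)
            (fun x => x ^ (τ / (τ - 1))) - 1).trace)
      (Set.Ioi ((1 - τ) * specNorm Ke)) :=
  tau_entropy_antitone_general Ke hKe me τ hτ0 hτ1
end

section
/- For a fixed d ≥ 0 and τ ∈ (0,1), the scalar function h(λ) = (λ/τ)((1 − ((1−τ)/λ)d)^{τ/(τ−1)} − 1), defined for λ > (1−τ)d, is nonnegative and monotone nonincreasing in λ, with lim_{λ→∞} h(λ) = d. -/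
open Real Filter Topology Set

/-!
With `c = (1 - τ) d` and `p = τ / (τ - 1) ≤ 0` the function is `τ⁻¹ · x ((1 - c / x) ^ p - 1)`.
It is nonnegative because `(1 - c / x) ^ p ≥ 1`. Writing `u = 1 - c / x`, its derivative is
`τ⁻¹ (u ^ (p - 1) (u + p (1 - u)) - 1)`, which is nonpositive by Bernoulli's inequality
`u ^ (1 - p) ≥ 1 + (1 - p) (u - 1)`. Finally `x ((1 - c / x) ^ p - 1)` is the difference quotient
of `t ↦ (1 - c t) ^ p` at `0` with step `1 / x`, so it tends to the derivative `-c p` there,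
and `-τ⁻¹ c p = d`.
-/

lemma rpow_sub_one_mul_le_one_of_nonpos {p u : ℝ} (hp : p ≤ 0) (hu : 0 < u) :
    u ^ (p - 1) * (u + p * (1 - u)) ≤ 1 := by
  have bernoulli : 1 + (1 - p) * (u - 1) ≤ u ^ (1 - p) := by
    simpa using one_add_mul_self_le_rpow_one_add (s := u - 1) (by linarith) (p := 1 - p)
      (by linarith)
  calc u ^ (p - 1) * (u + p * (1 - u)) ≤ u ^ (p - 1) * u ^ (1 - p) := by
        gcongr; linarith
    _ = 1 := by rw [← rpow_add hu]; norm_num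

lemma tendsto_mul_sub_apply_inv_atTop {ψ : ℝ → ℝ} {a : ℝ} (h : HasDerivAt ψ a 0) :
    Tendsto (fun x => x * (ψ x⁻¹ - ψ 0)) atTop (𝓝 a) := by
  have hinv : Tendsto (fun x : ℝ => x⁻¹) atTop (𝓝[≠] 0) :=
    tendsto_inv_atTop_nhdsGT_zero.mono_right (nhdsWithin_mono _ fun _ hx => ne_of_gt hx)
  refine ((hasDerivAt_iff_tendsto_slope.1 h).comp hinv).congr fun x => ?_
  simp [slope_def_field, div_inv_eq_mul, mul_comm]

section

variable {c p : ℝ}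

lemma hasDerivAt_mul_one_sub_div_rpow_sub_one {x : ℝ} (hx : x ≠ 0) (hu : 1 - c / x ≠ 0) :
    HasDerivAt (fun y => y * ((1 - c / y) ^ p - 1))
      ((1 - c / x) ^ (p - 1) * ((1 - c / x) + p * (1 - (1 - c / x))) - 1) x := by
  have hbase : HasDerivAt (fun y => 1 - c / y) (c / x ^ 2) x := by
    simpa [div_eq_mul_inv] using ((hasDerivAt_inv hx).const_mul c).const_sub 1
  refine ((hasDerivAt_id' x).mul ((hbase.rpow_const (p := p) (Or.inl hu)).sub_const 1)).congr_deriv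
    ?_
  have hslope : c / x ^ 2 = (1 - (1 - c / x)) / x := by field_simp; ring
  rw [rpow_sub_one hu, hslope]
  generalize 1 - c / x = u at hu ⊢
  field_simp
  ring

lemma one_sub_div_pos {x : ℝ} (hc : 0 ≤ c) (hx : c < x) : 0 < 1 - c / x :=
  sub_pos.2 ((div_lt_one (hc.trans_lt hx)).2 hx)

lemma mul_one_sub_div_rpow_sub_one_nonneg (hp : p ≤ 0) (hc : 0 ≤ c) {x : ℝ} (hx : c < x) :
    0 ≤ x * ((1 - c / x) ^ p - 1) := by
  have hx0 : 0 < x := hc.trans_lt hx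
  refine mul_nonneg hx0.le (sub_nonneg.2 ?_)
  exact one_le_rpow_of_pos_of_le_one_of_nonpos (one_sub_div_pos hc hx)
    (sub_le_self _ (div_nonneg hc hx0.le)) hp

lemma antitoneOn_mul_one_sub_div_rpow_sub_one (hp : p ≤ 0) (hc : 0 ≤ c) :
    AntitoneOn (fun x => x * ((1 - c / x) ^ p - 1)) (Ioi c) := by
  set f' : ℝ → ℝ := fun x => (1 - c / x) ^ (p - 1) * ((1 - c / x) + p * (1 - (1 - c / x))) - 1
  have hderiv : ∀ x ∈ Ioi c, HasDerivAt (fun y => y * ((1 - c / y) ^ p - 1)) (f' x) x :=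
    fun x hx =>
      hasDerivAt_mul_one_sub_div_rpow_sub_one (hc.trans_lt hx).ne' (one_sub_div_pos hc hx).ne'
  refine antitoneOn_of_hasDerivWithinAt_nonpos (f' := f') (convex_Ioi c)
    (fun x hx => (hderiv x hx).continuousAt.continuousWithinAt) ?_ ?_ <;> rw [interior_Ioi]
  · exact fun x hx => (hderiv x hx).hasDerivWithinAt
  · exact fun x hx => sub_nonpos.2 (rpow_sub_one_mul_le_one_of_nonpos hp (one_sub_div_pos hc hx))

end

lemma tendsto_mul_one_sub_div_rpow_sub_one_atTop (c p : ℝ) :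
    Tendsto (fun x => x * ((1 - c / x) ^ p - 1)) atTop (𝓝 (-(c * p))) := by
  have hψ : HasDerivAt (fun t => (1 - c * t) ^ p) (-(c * p)) 0 := by
    simpa using (((hasDerivAt_id' 0).const_mul c).const_sub 1).rpow_const (p := p)
      (Or.inl (by simp))
  simpa [div_eq_mul_inv] using tendsto_mul_sub_apply_inv_atTop hψ

/-- The per-eigenvalue τ entropy `h(λ) = (λ/τ)((1 − ((1−τ)/λ)d)^{τ/(τ−1)} − 1)`
is nonnegative and monotone nonincreasing on `λ > (1−τ)d`, and tends to `d`
as `λ → ∞`. -/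
theorem tau_entropy_scalar_props (τ d : ℝ) (hτ0 : 0 < τ) (hτ1 : τ < 1) (hd : 0 ≤ d) :
    (∀ lam : ℝ, (1 - τ) * d < lam →
      0 ≤ (lam / τ) * ((1 - ((1 - τ) / lam) * d) ^ (τ / (τ - 1)) - 1)) ∧
    AntitoneOn (fun lam : ℝ => (lam / τ) * ((1 - ((1 - τ) / lam) * d) ^ (τ / (τ - 1)) - 1))
      (Set.Ioi ((1 - τ) * d)) ∧
    Filter.Tendsto (fun lam : ℝ => (lam / τ) * ((1 - ((1 - τ) / lam) * d) ^ (τ / (τ - 1)) - 1))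
      Filter.atTop (nhds d) := by
  have hp : τ / (τ - 1) ≤ 0 := div_nonpos_of_nonneg_of_nonpos hτ0.le (by linarith)
  have hc : 0 ≤ (1 - τ) * d := mul_nonneg (by linarith) hd
  have hscale : ∀ lam : ℝ, (lam / τ) * ((1 - ((1 - τ) / lam) * d) ^ (τ / (τ - 1)) - 1) =
      τ⁻¹ * (lam * ((1 - (1 - τ) * d / lam) ^ (τ / (τ - 1)) - 1)) := fun lam => by
    rw [div_mul_eq_mul_div (1 - τ) lam d]; ring
  simp only [hscale]
  refine ⟨fun lam hlam => ?_, fun x hx y hy hxy => ?_, ?_⟩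
  · exact mul_nonneg (by positivity) (mul_one_sub_div_rpow_sub_one_nonneg hp hc hlam)
  · exact mul_le_mul_of_nonneg_left (antitoneOn_mul_one_sub_div_rpow_sub_one hp hc hx hy hxy)
      (by positivity)
  · convert (tendsto_mul_one_sub_div_rpow_sub_one_atTop ((1 - τ) * d) (τ / (τ - 1))).const_mul τ⁻¹
      using 2
    field_simp [sub_ne_zero.2 hτ1.ne]
    ring
end

section
/- Let M = (I_n, −G°) L_z where K_z = L_z L_zᵀ is positive definite with blocks K_x, K_{xy}, K_{yx}, K_y and G° = K_{xy}K_y^{-1}. Then M Mᵀ = K_x − K_{xy} K_y^{-1} K_{yx} = P, and consequently the matrix W_λ = (I_n, −G°)ᵀ(I_n, −G°) − (λ/(1−τ)) K_z^{-1} is negative definite if and only if λ > (1−τ)‖P‖. -/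
/-!
Write `A = (I, −G°)` and `M = A L_z`. Since `G° K_y = K_{xy}`, the block product `A K_z Aᵀ`
collapses to the Schur complement, so `M Mᵀ = A K_z Aᵀ = P`. Conjugating
`−W_λ = c K_z⁻¹ − AᵀA`, `c = λ/(1−τ)`, by the invertible `L_z` gives `c I − MᵀM`. For `c > 0`,
`c I − MᵀM` is positive definite iff `c I − MMᵀ = c I − P` is (Cauchy–Schwarz), and by the
spectral theorem this says that every eigenvalue of `P` lies below `c`.
-/

open Matrix

namespace Matrix

variable {m l : Type*} [Fintype m] [Fintype l]

theorem IsHermitian.posDef_smul_one_sub_iff [DecidableEq l] {B : Matrix l l ℝ}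
    (hB : B.IsHermitian) (c : ℝ) :
    (c • (1 : Matrix l l ℝ) - B).PosDef ↔ ∀ i, hB.eigenvalues i < c := by
  set U : Matrix l l ℝ := (hB.eigenvectorUnitary : Matrix l l ℝ)
  have hconj : c • 1 - B = U * (c • 1 - diagonal hB.eigenvalues) * star U := by
    conv_lhs => rw [hB.spectral_theorem]
    simp [mul_sub, sub_mul, U]
  rw [hconj, Unitary.isUnit_coe.posDef_star_right_conjugate_iff, smul_one_eq_diagonal,
    diagonal_sub, posDef_diagonal_iff]
  simp only [sub_pos]

theorem posDef_smul_one_sub_transpose_mul_self_iff [DecidableEq l] (M : Matrix m l ℝ) (c : ℝ) :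
    (c • (1 : Matrix l l ℝ) - Mᵀ * M).PosDef ↔
      ∀ w : l → ℝ, w ≠ 0 → (M *ᵥ w) ⬝ᵥ (M *ᵥ w) < c * (w ⬝ᵥ w) := by
  have hquad (w : l → ℝ) : star w ⬝ᵥ ((c • (1 : Matrix l l ℝ) - Mᵀ * M) *ᵥ w)
      = c * (w ⬝ᵥ w) - (M *ᵥ w) ⬝ᵥ (M *ᵥ w) := by
    rw [star_trivial, sub_mulVec, dotProduct_sub, smul_mulVec, one_mulVec, dotProduct_smul,
      smul_eq_mul, ← mulVec_mulVec, dotProduct_mulVec, vecMul_transpose]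
  have hherm : (c • (1 : Matrix l l ℝ) - Mᵀ * M).IsHermitian := by
    simp [IsHermitian]
  simp only [posDef_iff_dotProduct_mulVec, hherm, true_and, hquad, sub_pos]

theorem dotProduct_transpose_mulVec_self_lt {M : Matrix m l ℝ} {c : ℝ} (hc : 0 < c)
    (hM : ∀ w : l → ℝ, w ≠ 0 → (M *ᵥ w) ⬝ᵥ (M *ᵥ w) < c * (w ⬝ᵥ w))
    {v : m → ℝ} (hv : v ≠ 0) : (Mᵀ *ᵥ v) ⬝ᵥ (Mᵀ *ᵥ v) < c * (v ⬝ᵥ v) := by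
  set w := Mᵀ *ᵥ v
  have hv' : 0 < v ⬝ᵥ v := by simpa using dotProduct_star_self_pos_iff.mpr hv
  rcases eq_or_ne w 0 with hw | hw
  · simpa [hw] using mul_pos hc hv'
  have hw' : 0 < w ⬝ᵥ w := by simpa using dotProduct_star_self_pos_iff.mpr hw
  have hww : w ⬝ᵥ w = (M *ᵥ w) ⬝ᵥ v := by
    rw [dotProduct_comm, dotProduct_mulVec, vecMul_transpose]
  -- Cauchy–Schwarz: `‖w‖⁴ = ⟪M w, v⟫² ≤ ‖M w‖² ‖v‖² < c ‖w‖² ‖v‖²`.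
  have hCS : (w ⬝ᵥ w) ^ 2 ≤ ((M *ᵥ w) ⬝ᵥ (M *ᵥ w)) * (v ⬝ᵥ v) := by
    rw [hww]
    simpa only [dotProduct, sq] using Finset.sum_mul_sq_le_sq_mul_sq Finset.univ (M *ᵥ w) v
  nlinarith [mul_lt_mul_of_pos_right (hM w hw) hv']

theorem posDef_smul_one_sub_transpose_mul_self_iff_mul_transpose [DecidableEq m] [DecidableEq l]
    (M : Matrix m l ℝ) {c : ℝ} (hc : 0 < c) :
    (c • (1 : Matrix l l ℝ) - Mᵀ * M).PosDef ↔ (c • (1 : Matrix m m ℝ) - M * Mᵀ).PosDef := by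
  have h := posDef_smul_one_sub_transpose_mul_self_iff Mᵀ c
  rw [transpose_transpose] at h
  rw [posDef_smul_one_sub_transpose_mul_self_iff, h]
  refine ⟨fun hM _ => dotProduct_transpose_mulVec_self_lt hc hM, fun hM w hw => ?_⟩
  simpa using dotProduct_transpose_mulVec_self_lt hc hM hw

theorem transpose_mul_smul_inv_sub_mul {R : Type*} [CommRing R] [DecidableEq l]
    {L : Matrix l l R} (hL : IsUnit L.det) (A : Matrix m l R) (c : R) :
    Lᵀ * (c • (L * Lᵀ)⁻¹ - Aᵀ * A) * L = c • 1 - (A * L)ᵀ * (A * L) := by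
  have hLt : IsUnit Lᵀ.det := by rwa [det_transpose]
  rw [Matrix.mul_sub, Matrix.sub_mul, mul_inv_rev, Matrix.mul_smul, Matrix.smul_mul,
    mul_nonsing_inv_cancel_left _ _ hLt, nonsing_inv_mul _ hL, transpose_mul]
  simp only [Matrix.mul_assoc]

theorem fromCols_one_neg_mul_fromBlocks_mul_transpose {R : Type*} [CommRing R]
    [DecidableEq m] [DecidableEq l] (A : Matrix m m R) (B : Matrix m l R) (C : Matrix l m R)
    {D : Matrix l l R} (hD : IsUnit D.det) :
    fromCols (1 : Matrix m m R) (-(B * D⁻¹)) * fromBlocks A B C D *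
        (fromCols (1 : Matrix m m R) (-(B * D⁻¹)))ᵀ
      = A - B * D⁻¹ * C := by
  have hB : (1 : Matrix m m R) * B + -(B * D⁻¹) * D = 0 := by
    rw [Matrix.neg_mul, Matrix.mul_assoc, nonsing_inv_mul _ hD, Matrix.one_mul, Matrix.mul_one,
      add_neg_cancel]
  rw [transpose_fromCols, fromCols_mul_fromBlocks, fromCols_mul_fromRows, hB]
  simp [sub_eq_add_neg]

end Matrix

theorem specNorm_lt_iff {n : ℕ} {A : Matrix (Fin n) (Fin n) ℝ} (hA : A.IsHermitian) {c : ℝ}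
    (hc : 0 < c) : specNorm A < c ↔ ∀ i, hA.eigenvalues i < c := by
  rw [specNorm, dif_pos hA]
  rcases isEmpty_or_nonempty (Fin n) with hn | hn
  · simp [Real.iSup_of_isEmpty, hc]
  · obtain ⟨j, hj⟩ := exists_eq_ciSup_of_finite (f := hA.eigenvalues)
    rw [← hj]
    exact ⟨fun h i => (le_ciSup (Finite.bddAbove_range _) i).trans_lt (hj ▸ h), fun h => h j⟩

theorem W_lambda_negdef_iff_general {n p : ℕ}
    (Kx : Matrix (Fin n) (Fin n) ℝ) (Kxy : Matrix (Fin n) (Fin p) ℝ)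
    (Kyx : Matrix (Fin p) (Fin n) ℝ) (Ky : Matrix (Fin p) (Fin p) ℝ)
    (hKz : (Matrix.fromBlocks Kx Kxy Kyx Ky).PosDef)
    (Lz : Matrix (Fin n ⊕ Fin p) (Fin n ⊕ Fin p) ℝ)
    (hfac : Matrix.fromBlocks Kx Kxy Kyx Ky = Lz * Lzᵀ)
    (τ lam : ℝ) (hτ1 : τ < 1) (hlam : 0 < lam) :
    (Matrix.fromCols (1 : Matrix (Fin n) (Fin n) ℝ) (-(Kxy * Ky⁻¹)) * Lz) *
        (Matrix.fromCols (1 : Matrix (Fin n) (Fin n) ℝ) (-(Kxy * Ky⁻¹)) * Lz)ᵀ =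
      Kx - Kxy * Ky⁻¹ * Kyx ∧
    ((-((Matrix.fromCols (1 : Matrix (Fin n) (Fin n) ℝ) (-(Kxy * Ky⁻¹)))ᵀ *
          Matrix.fromCols (1 : Matrix (Fin n) (Fin n) ℝ) (-(Kxy * Ky⁻¹)) -
        (lam / (1 - τ)) • (Matrix.fromBlocks Kx Kxy Kyx Ky)⁻¹)).PosDef ↔
      (1 - τ) * specNorm (Kx - Kxy * Ky⁻¹ * Kyx) < lam) := by
  set G := fromCols (1 : Matrix (Fin n) (Fin n) ℝ) (-(Kxy * Ky⁻¹))
  have hKy : IsUnit Ky.det := by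
    have h := hKz.submatrix (e := Sum.inr) Sum.inr_injective
    rw [show (fromBlocks Kx Kxy Kyx Ky).submatrix Sum.inr Sum.inr = Ky by ext; simp] at h
    exact (isUnit_iff_isUnit_det _).1 h.isUnit
  have hL : IsUnit Lz.det := by
    have h := (isUnit_iff_isUnit_det _).1 hKz.isUnit
    rw [hfac, det_mul] at h
    exact isUnit_of_mul_isUnit_left h
  have hMM : (G * Lz) * (G * Lz)ᵀ = Kx - Kxy * Ky⁻¹ * Kyx := by
    rw [transpose_mul, ← Matrix.mul_assoc, Matrix.mul_assoc G, ← hfac]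
    exact fromCols_one_neg_mul_fromBlocks_mul_transpose Kx Kxy Kyx hKy
  have hP : (Kx - Kxy * Ky⁻¹ * Kyx).IsHermitian := by
    have h := isHermitian_mul_conjTranspose_self (G * Lz)
    rwa [conjTranspose_eq_transpose_of_trivial, hMM] at h
  have h1τ : 0 < 1 - τ := sub_pos.2 hτ1
  have hc : 0 < lam / (1 - τ) := div_pos hlam h1τ
  refine ⟨hMM, ?_⟩
  rw [neg_sub, ← (isUnit_iff_isUnit_det _ |>.2 hL).posDef_star_left_conjugate_iff,
    star_eq_conjTranspose, conjTranspose_eq_transpose_of_trivial, hfac,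
    transpose_mul_smul_inv_sub_mul hL,
    posDef_smul_one_sub_transpose_mul_self_iff_mul_transpose _ hc, hMM,
    hP.posDef_smul_one_sub_iff, ← specNorm_lt_iff hP hc, lt_div_iff₀ h1τ,
    mul_comm]

/-- With `M = (I, −G°) L_z`, `K_z = L_z L_zᵀ`, `G° = K_{xy} K_y⁻¹`:
`M Mᵀ = P` (the Schur complement), and
`W_λ = (I, −G°)ᵀ (I, −G°) − (λ/(1−τ)) K_z⁻¹` is negative definite iff
`λ > (1−τ)‖P‖`. -/
theorem W_lambda_negdef_iff {n p : ℕ}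
    (Kx : Matrix (Fin n) (Fin n) ℝ) (Kxy : Matrix (Fin n) (Fin p) ℝ)
    (Kyx : Matrix (Fin p) (Fin n) ℝ) (Ky : Matrix (Fin p) (Fin p) ℝ)
    (hsym : Kyx = Kxyᵀ)
    (hKz : (Matrix.fromBlocks Kx Kxy Kyx Ky).PosDef)
    (Lz : Matrix (Fin n ⊕ Fin p) (Fin n ⊕ Fin p) ℝ)
    (hfac : Matrix.fromBlocks Kx Kxy Kyx Ky = Lz * Lzᵀ)
    (τ lam : ℝ) (hτ0 : 0 ≤ τ) (hτ1 : τ < 1) (hlam : 0 < lam) :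
    (Matrix.fromCols (1 : Matrix (Fin n) (Fin n) ℝ) (-(Kxy * Ky⁻¹)) * Lz) *
        (Matrix.fromCols (1 : Matrix (Fin n) (Fin n) ℝ) (-(Kxy * Ky⁻¹)) * Lz)ᵀ =
      Kx - Kxy * Ky⁻¹ * Kyx ∧
    ((-((Matrix.fromCols (1 : Matrix (Fin n) (Fin n) ℝ) (-(Kxy * Ky⁻¹)))ᵀ *
          Matrix.fromCols (1 : Matrix (Fin n) (Fin n) ℝ) (-(Kxy * Ky⁻¹)) -
        (lam / (1 - τ)) • (Matrix.fromBlocks Kx Kxy Kyx Ky)⁻¹)).PosDef ↔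
      (1 - τ) * specNorm (Kx - Kxy * Ky⁻¹ * Kyx) < lam) :=
  W_lambda_negdef_iff_general Kx Kxy Kyx Ky hKz Lz hfac τ lam hτ1 hlam
end
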